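/- arXiv:2510.21001 — 2 statements merged into one kernel-verified Lean document; each statement's English description precedes it below -/
import Mathlib

section
/- Let K be a real valued field, I ⊂ K{x}^N a submodule and S = {f_1,…,f_m} a standard basis of I with respect to a local degree ordering. Then for every f ∈ K{x}^N one has f ∈ I if and only if NF(f|S) = 0. -/
open MvPowerSeries Finsupp ENNReal

namespace GrauertRVF

variable {K : Type} [Field K]

/-- total degree of a multi-exponent -/
def deg {σ : Type} (d : σ →₀ ℕ) : ℕ := d.sum fun _ k => k

/-- the `ε`-norm `‖f‖_ε = Σ_d |c_d| ε^d` of a formal power series (value in `ℝ≥0∞`). -/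
noncomputable def wnorm {σ : Type} [Fintype σ] (abv : AbsoluteValue K ℝ) (ε : σ → ℝ)
    (f : MvPowerSeries σ K) : ℝ≥0∞ :=
  ∑' d : σ →₀ ℕ, ENNReal.ofReal (abv (MvPowerSeries.coeff (R := K) d f) * ∏ i, ε i ^ d i)

/-- the `ε`-norm of a vector of formal power series. -/
noncomputable def vnorm {σ : Type} [Fintype σ] {N : ℕ} (abv : AbsoluteValue K ℝ) (ε : σ → ℝ)
    (f : Fin N → MvPowerSeries σ K) : ℝ≥0∞ :=
  ∑ k, wnorm abv ε (f k)

/-- `f` is a convergent power series. -/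
def IsConv {σ : Type} [Fintype σ] (abv : AbsoluteValue K ℝ) (f : MvPowerSeries σ K) : Prop :=
  ∃ ε : σ → ℝ, (∀ i, 0 < ε i) ∧ wnorm abv ε f < ⊤

/-- `f` is a convergent vector of power series. -/
def IsConvV {σ : Type} [Fintype σ] {N : ℕ} (abv : AbsoluteValue K ℝ) (f : Fin N → MvPowerSeries σ K) : Prop :=
  ∃ ε : σ → ℝ, (∀ i, 0 < ε i) ∧ vnorm abv ε f < ⊤

/-- `x^α > x^β` in the local degree ordering deglex. -/
def MonGT {n : ℕ} (α β : Fin n →₀ ℕ) : Prop :=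
  deg α < deg β ∨ (deg α = deg β ∧ ∃ l : Fin n, (∀ j : Fin n, j < l → α j = β j) ∧ α l < β l)

/-- module monomial ordering: `x^α e_i > x^β e_j` iff `x^α > x^β`, or `α = β` and `i < j`. -/
def MMonGT {n N : ℕ} (p q : (Fin n →₀ ℕ) × Fin N) : Prop :=
  MonGT p.1 q.1 ∨ (p.1 = q.1 ∧ p.2 < q.2)

/-- `x^α e_i` divides `x^β e_j` iff `i = j` and `x^α ∣ x^β`. -/
def MMonDvd {n N : ℕ} (p q : (Fin n →₀ ℕ) × Fin N) : Prop :=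
  p.2 = q.2 ∧ p.1 ≤ q.1

/-- `p` is the leading monomial of the vector `f` of power series. -/
def IsLM {n N : ℕ} (f : Fin N → MvPowerSeries (Fin n) K) (p : (Fin n →₀ ℕ) × Fin N) : Prop :=
  MvPowerSeries.coeff (R := K) p.1 (f p.2) ≠ 0 ∧
    ∀ q : (Fin n →₀ ℕ) × Fin N, MvPowerSeries.coeff (R := K) q.1 (f q.2) ≠ 0 → q = p ∨ MMonGT p q

/-- `α` is the leading monomial of the power series `f`. -/
def IsLM1 {n : ℕ} (f : MvPowerSeries (Fin n) K) (α : Fin n →₀ ℕ) : Prop :=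
  MvPowerSeries.coeff (R := K) α f ≠ 0 ∧
    ∀ β : Fin n →₀ ℕ, MvPowerSeries.coeff (R := K) β f ≠ 0 → β = α ∨ MonGT α β

/-- the tail `f - LT(f)` of `f`, where `p` is the leading monomial of `f`. -/
noncomputable def tailOf {n N : ℕ} (f : Fin N → MvPowerSeries (Fin n) K)
    (p : (Fin n →₀ ℕ) × Fin N) : Fin N → MvPowerSeries (Fin n) K :=
  fun k => if k = p.2 then
    f k - (MvPowerSeries.monomial (R := K) p.1) (MvPowerSeries.coeff (R := K) p.1 (f k)) else f k

/-- formal substitution: `subst Φ f = f(Φ)`; meaningful when each `Φ j` has zero constant term. -/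
noncomputable def subst {σ τ : Type} [Fintype σ] [DecidableEq σ] [Fintype τ] [DecidableEq τ]
    (Φ : σ → MvPowerSeries τ K) (f : MvPowerSeries σ K) : MvPowerSeries τ K :=
  fun e => ∑ d ∈ Finset.Iic (Finsupp.equivFunOnFinite.symm fun _ : σ => deg e),
    MvPowerSeries.coeff (R := K) d f * MvPowerSeries.coeff (R := K) e (∏ j, Φ j ^ d j)

/-- every monomial of `f` has total degree at least `l`, i.e. `f ∈ 𝔪^l`. -/
def OrderGE {σ : Type} [Fintype σ] (l : ℕ) (f : MvPowerSeries σ K) : Prop :=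
  ∀ d, MvPowerSeries.coeff (R := K) d f ≠ 0 → l ≤ deg d

/-- formal partial derivative `∂f/∂x_i`. -/
noncomputable def pd {n : ℕ} (i : Fin n) (f : MvPowerSeries (Fin n) K) :
    MvPowerSeries (Fin n) K :=
  fun d => (((d i) + 1 : ℕ) : K) * MvPowerSeries.coeff (R := K) (d + Finsupp.single i 1) f

/-- the Hessian matrix `(∂²f/∂x_i∂x_j(0))`. -/
noncomputable def hess {n : ℕ} (f : MvPowerSeries (Fin n) K) : Matrix (Fin n) (Fin n) K :=
  Matrix.of fun i j => if i = j then 2 * MvPowerSeries.coeff (R := K) (Finsupp.single i 2) f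
    else MvPowerSeries.coeff (R := K) (Finsupp.single i 1 + Finsupp.single j 1) f

/-- right equivalence: `g = φ(f)` for a `K`-algebra automorphism `φ` of `K{x}`,
given by a convergent coordinate change `Φ` with zero constant terms and
invertible linear part. -/
def RightEquiv {n : ℕ} (abv : AbsoluteValue K ℝ) (f g : MvPowerSeries (Fin n) K) : Prop :=
  ∃ Φ : Fin n → MvPowerSeries (Fin n) K,
    (∀ i, IsConv abv (Φ i)) ∧
    (∀ i, MvPowerSeries.constantCoeff (σ := Fin n) (R := K) (Φ i) = 0) ∧
    (Matrix.of fun i j => MvPowerSeries.coeff (R := K) (Finsupp.single j 1) (Φ i)).det ≠ 0 ∧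
    subst Φ f = g

/-- contact equivalence: `g = u·φ(f)` for an automorphism `φ` and a unit `u` of `K{x}`. -/
def ContactEquiv {n : ℕ} (abv : AbsoluteValue K ℝ) (f g : MvPowerSeries (Fin n) K) : Prop :=
  ∃ (Φ : Fin n → MvPowerSeries (Fin n) K) (u : MvPowerSeries (Fin n) K),
    (∀ i, IsConv abv (Φ i)) ∧
    (∀ i, MvPowerSeries.constantCoeff (σ := Fin n) (R := K) (Φ i) = 0) ∧
    (Matrix.of fun i j => MvPowerSeries.coeff (R := K) (Finsupp.single j 1) (Φ i)).det ≠ 0 ∧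
    IsConv abv u ∧ MvPowerSeries.constantCoeff (σ := Fin n) (R := K) u ≠ 0 ∧
    u * subst Φ f = g

/-- the `x`-part of a mixed exponent. -/
noncomputable def xpart {n q : ℕ} (d : (Fin n ⊕ Fin q) →₀ ℕ) : Fin n →₀ ℕ :=
  Finsupp.equivFunOnFinite.symm fun i => d (Sum.inl i)

/-- the `s`-part of a mixed exponent. -/
noncomputable def spart {n q : ℕ} (d : (Fin n ⊕ Fin q) →₀ ℕ) : Fin q →₀ ℕ :=
  Finsupp.equivFunOnFinite.symm fun j => d (Sum.inr j)

/-- the degree in the second block of variables. -/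
def sdeg {n q : ℕ} (d : (Fin n ⊕ Fin q) →₀ ℕ) : ℕ := ∑ j : Fin q, d (Sum.inr j)

/-- `g` involves only the first block of variables. -/
def OnlyX {n q : ℕ} (g : MvPowerSeries (Fin n ⊕ Fin q) K) : Prop :=
  ∀ d, MvPowerSeries.coeff (R := K) d g ≠ 0 → ∀ j : Fin q, d (Sum.inr j) = 0

/-- `g` involves only the second block of variables. -/
def OnlyS {n q : ℕ} (g : MvPowerSeries (Fin n ⊕ Fin q) K) : Prop :=
  ∀ d, MvPowerSeries.coeff (R := K) d g ≠ 0 → ∀ i : Fin n, d (Sum.inl i) = 0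

/-- `g` is homogeneous of degree `e` in the second block of variables. -/
def SHomog {n q : ℕ} (e : ℕ) (g : MvPowerSeries (Fin n ⊕ Fin q) K) : Prop :=
  ∀ d, MvPowerSeries.coeff (R := K) d g ≠ 0 → sdeg d = e

/-- `g` is a polynomial of degree `≤ e` in the second block of variables. -/
def SDegLE {n q : ℕ} (e : ℕ) (g : MvPowerSeries (Fin n ⊕ Fin q) K) : Prop :=
  ∀ d, MvPowerSeries.coeff (R := K) d g ≠ 0 → sdeg d ≤ e

/-- `g` has order `≥ l` in the second block of variables, i.e. `g ∈ 𝔪_s^l·K[[x,s]]`. -/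
def SOrderGE {n q : ℕ} (l : ℕ) (g : MvPowerSeries (Fin n ⊕ Fin q) K) : Prop :=
  ∀ d, MvPowerSeries.coeff (R := K) d g ≠ 0 → l ≤ sdeg d

/-- a polynomial regarded as a power series. -/
def polyToPS {n : ℕ} (p : MvPolynomial (Fin n) K) : MvPowerSeries (Fin n) K :=
  fun d => MvPolynomial.coeff d p

/-- inclusion `K{x} → K{x,s}`. -/
noncomputable def inclX {n q : ℕ} (f : MvPowerSeries (Fin n) K) :
    MvPowerSeries (Fin n ⊕ Fin q) K :=
  subst (fun i => MvPowerSeries.X (Sum.inl i)) f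

/-- inclusion `K{s} → K{x,s}`. -/
noncomputable def inclS {n q : ℕ} (f : MvPowerSeries (Fin q) K) :
    MvPowerSeries (Fin n ⊕ Fin q) K :=
  subst (fun j => MvPowerSeries.X (Sum.inr j)) f


/-- `I` is a submodule of `K{x}^N` over `K{x}`: a set of convergent power series vectors
containing `0`, closed under addition and under multiplication by convergent scalars. -/
def IsConvSubmodule {K : Type} [Field K] (abv : AbsoluteValue K ℝ) {n N : ℕ}
    (I : Set (Fin N → MvPowerSeries (Fin n) K)) : Prop :=
  (0 ∈ I) ∧ (∀ g ∈ I, IsConvV abv g) ∧ (∀ g ∈ I, ∀ h ∈ I, g + h ∈ I) ∧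
  (∀ a : MvPowerSeries (Fin n) K, IsConv abv a → ∀ g ∈ I, (fun k => a * g k) ∈ I)

/-- `S` is a standard basis of the submodule `I ⊆ K{x}^N`:  `S ⊆ I ∖ {0}` and every
leading monomial of a nonzero element of `I` is divisible by some `LM(S j)`. -/
def IsStdBasis {K : Type} [Field K] (abv : AbsoluteValue K ℝ) {n N m : ℕ}
    (I : Set (Fin N → MvPowerSeries (Fin n) K))
    (S : Fin m → Fin N → MvPowerSeries (Fin n) K) : Prop :=
  (∀ j, S j ∈ I) ∧ (∀ j, S j ≠ 0) ∧
  ∀ g ∈ I, g ≠ 0 → ∀ p : (Fin n →₀ ℕ) × Fin N, IsLM g p →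
    ∃ j, ∃ p' : (Fin n →₀ ℕ) × Fin N, IsLM (S j) p' ∧ MMonDvd p' p

/-- `r` is the remainder (normal form) of the Grauert division of `g` by the ordered
tuple `S` in `K{x}^N`: `g = Σ_j q_j S_j + r` with convergent `q_j`, `r`, and no monomial
of `r` is divisible by any `LM(S j)`. -/
def IsRemainder {K : Type} [Field K] (abv : AbsoluteValue K ℝ) {n N m : ℕ}
    (S : Fin m → Fin N → MvPowerSeries (Fin n) K)
    (g r : Fin N → MvPowerSeries (Fin n) K) : Prop :=
  (∃ q : Fin m → MvPowerSeries (Fin n) K, (∀ j, IsConv abv (q j)) ∧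
    g = (fun k => ∑ j, q j * S j k) + r) ∧
  IsConvV abv r ∧
  ∀ p : (Fin n →₀ ℕ) × Fin N, MvPowerSeries.coeff (R := K) p.1 (r p.2) ≠ 0 →
    ∀ j (p' : (Fin n →₀ ℕ) × Fin N), IsLM (S j) p' → ¬ MMonDvd p' p

/-- the leading module `L(T)`: the `K[x]`-submodule of `K[x]^N` generated by the leading
monomials of the nonzero elements of `T`. -/
noncomputable def leadingModule {K : Type} [Field K] {n N : ℕ}
    (T : Set (Fin N → MvPowerSeries (Fin n) K)) :
    Submodule (MvPolynomial (Fin n) K) (Fin N → MvPolynomial (Fin n) K) :=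
  Submodule.span _ {v | ∃ g ∈ T, ∃ p : (Fin n →₀ ℕ) × Fin N, IsLM g p ∧
    v = Pi.single p.2 ((MvPolynomial.monomial p.1) (1 : K))}

/- Write `f = Σ q_j S_j + r`. The linear combination lies in `I`, so `f ∈ I` iff
`r ∈ I`. If `r ∈ I` were nonzero, its leading monomial would be divisible by some `LM(S_j)`,
since `S` is a standard basis; but no monomial of a remainder is. -/

section LeadingMonomial

variable {n N : ℕ}

noncomputable def mkey (p : (Fin n →₀ ℕ) × Fin N) : ℕ ×ₗ (Lex (Fin n → ℕ) ×ₗ Fin N) :=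
  toLex (deg p.1, toLex (toLex ⇑p.1, p.2))

lemma mkey_injective : Function.Injective (mkey (n := n) (N := N)) := by
  intro p q h
  obtain ⟨-, h⟩ := Prod.ext_iff.mp (toLex.injective h)
  obtain ⟨h₁, h₂⟩ := Prod.ext_iff.mp (toLex.injective h)
  exact Prod.ext (DFunLike.coe_injective (toLex.injective h₁)) h₂

lemma mMonGT_iff_mkey_lt (p q : (Fin n →₀ ℕ) × Fin N) : MMonGT p q ↔ mkey p < mkey q := by
  unfold mkey MMonGT MonGT
  rw [Prod.Lex.lt_iff, Prod.Lex.lt_iff]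
  have hlex : toLex ⇑p.1 < toLex ⇑q.1 ↔
      ∃ l : Fin n, (∀ j : Fin n, j < l → p.1 j = q.1 j) ∧ p.1 l < q.1 l := Iff.rfl
  constructor
  · rintro ((hd | ⟨hd, hl⟩) | ⟨he, hi⟩)
    · exact Or.inl hd
    · exact Or.inr ⟨hd, Or.inl (hlex.mpr hl)⟩
    · exact Or.inr ⟨congrArg deg he, Or.inr ⟨congrArg (fun a : Fin n →₀ ℕ => toLex ⇑a) he, hi⟩⟩
  · rintro (hd | ⟨hd, hl | ⟨he, hi⟩⟩)
    · exact Or.inl (Or.inl hd)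
    · exact Or.inl (Or.inr ⟨hd, hlex.mp hl⟩)
    · exact Or.inr ⟨DFunLike.coe_injective (toLex.injective he), hi⟩

/- A local ordering is not a well-ordering, but since deglex compares degrees first there is no
infinite strictly increasing chain, so every nonzero series has a leading monomial. -/
lemma wellFounded_mMonGT : WellFounded (MMonGT (n := n) (N := N)) := by
  have h : MMonGT (n := n) (N := N) = InvImage (· < ·) mkey := by
    funext p q
    exact propext (mMonGT_iff_mkey_lt p q)
  exact h ▸ InvImage.wf mkey wellFounded_lt

lemma mMonGT_or_mMonGT_of_ne {p q : (Fin n →₀ ℕ) × Fin N} (h : p ≠ q) :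
    MMonGT p q ∨ MMonGT q p := by
  simp only [mMonGT_iff_mkey_lt]
  exact lt_or_gt_of_ne (mkey_injective.ne h)

lemma exists_isLM {f : Fin N → MvPowerSeries (Fin n) K} (hf : f ≠ 0) : ∃ p, IsLM f p := by
  set D : Set ((Fin n →₀ ℕ) × Fin N) := {p | MvPowerSeries.coeff (R := K) p.1 (f p.2) ≠ 0}
  have hD : D.Nonempty := by
    obtain ⟨k, hk⟩ := Function.ne_iff.mp hf
    obtain ⟨α, hα⟩ := (MvPowerSeries.ne_zero_iff_exists_coeff_ne_zero _).mp hk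
    exact ⟨(α, k), hα⟩
  obtain ⟨p, hpD, hmax⟩ := wellFounded_mMonGT.has_min D hD
  refine ⟨p, hpD, fun q hqD => ?_⟩
  by_cases hqp : q = p
  · exact Or.inl hqp
  · exact Or.inr ((mMonGT_or_mMonGT_of_ne hqp).resolve_left (hmax q hqD))

end LeadingMonomial

lemma isConv_C {σ : Type} [Fintype σ] (abv : AbsoluteValue K ℝ) (c : K) :
    IsConv abv (MvPowerSeries.C (σ := σ) c) := by
  classical
  refine ⟨fun _ => 1, fun _ => one_pos, ?_⟩
  unfold wnorm
  rw [tsum_eq_single 0 fun d hd => by simp [MvPowerSeries.coeff_C, hd]]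
  exact ENNReal.ofReal_lt_top

namespace IsConvSubmodule

variable {abv : AbsoluteValue K ℝ} {n N : ℕ} {I : Set (Fin N → MvPowerSeries (Fin n) K)}

lemma sum_mul_mem (hI : IsConvSubmodule abv I) {ι : Type} (s : Finset ι)
    {q : ι → MvPowerSeries (Fin n) K} (hq : ∀ j, IsConv abv (q j))
    {g : ι → Fin N → MvPowerSeries (Fin n) K} (hg : ∀ j, g j ∈ I) :
    (fun k => ∑ j ∈ s, q j * g j k) ∈ I := by
  classical
  induction s using Finset.induction with
  | empty => simpa [← Pi.zero_def] using hI.1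
  | insert a s ha ih =>
    simp only [Finset.sum_insert ha]
    exact hI.2.2.1 _ (hI.2.2.2 _ (hq a) _ (hg a)) _ ih

lemma neg_mem (hI : IsConvSubmodule abv I) {g : Fin N → MvPowerSeries (Fin n) K} (hg : g ∈ I) :
    -g ∈ I := by
  have h := hI.2.2.2 _ (isConv_C abv (-1)) g hg
  simp only [map_neg, map_one, neg_one_mul] at h
  exact h

lemma sub_mem (hI : IsConvSubmodule abv I) {g h : Fin N → MvPowerSeries (Fin n) K}
    (hg : g ∈ I) (hh : h ∈ I) : g - h ∈ I :=
  sub_eq_add_neg g h ▸ hI.2.2.1 g hg _ (hI.neg_mem hh)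

end IsConvSubmodule

lemma IsStdBasis.eq_zero_of_mem_of_reduced {abv : AbsoluteValue K ℝ} {n N m : ℕ}
    {I : Set (Fin N → MvPowerSeries (Fin n) K)} {S : Fin m → Fin N → MvPowerSeries (Fin n) K}
    (hS : IsStdBasis abv I S) {r : Fin N → MvPowerSeries (Fin n) K} (hrI : r ∈ I)
    (hr : ∀ p : (Fin n →₀ ℕ) × Fin N, MvPowerSeries.coeff (R := K) p.1 (r p.2) ≠ 0 →
      ∀ j p', IsLM (S j) p' → ¬ MMonDvd p' p) :
    r = 0 := by
  by_contra hr0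
  obtain ⟨p, hp⟩ := exists_isLM hr0
  obtain ⟨j, p', hp', hdvd⟩ := hS.2.2 r hrI hr0 p hp
  exact hr p hp.1 j p' hp' hdvd

theorem mem_iff_normalForm_eq_zero_general {K : Type} [Field K] (abv : AbsoluteValue K ℝ)
    {n N m : ℕ} (I : Set (Fin N → MvPowerSeries (Fin n) K))
    (hI : IsConvSubmodule abv I)
    (S : Fin m → Fin N → MvPowerSeries (Fin n) K) (hS : IsStdBasis abv I S)
    (f : Fin N → MvPowerSeries (Fin n) K)
    (r : Fin N → MvPowerSeries (Fin n) K) (hr : IsRemainder abv S f r) :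
    f ∈ I ↔ r = 0 := by
  obtain ⟨⟨q, hq, rfl⟩, -, hr_reduced⟩ := hr
  have hqS : (fun k => ∑ j, q j * S j k) ∈ I := hI.sum_mul_mem Finset.univ hq hS.1
  constructor
  · intro hf
    have hrI : r ∈ I := by simpa using hI.sub_mem hf hqS
    exact hS.eq_zero_of_mem_of_reduced hrI hr_reduced
  · rintro rfl
    simpa using hqS

/-- Lemma 2.8 (1): `f ∈ I` iff `NF(f|S) = 0` for a standard basis `S` of `I`. -/
theorem mem_iff_normalForm_eq_zero {K : Type} [Field K] (abv : AbsoluteValue K ℝ)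
    {n N m : ℕ} (I : Set (Fin N → MvPowerSeries (Fin n) K))
    (hI : IsConvSubmodule abv I)
    (S : Fin m → Fin N → MvPowerSeries (Fin n) K) (hS : IsStdBasis abv I S)
    (f : Fin N → MvPowerSeries (Fin n) K) (hf : IsConvV abv f)
    (r : Fin N → MvPowerSeries (Fin n) K) (hr : IsRemainder abv S f r) :
    f ∈ I ↔ r = 0 :=
  mem_iff_normalForm_eq_zero_general abv I hI S hS f r hr
end GrauertRVF
end

section
/- Let K be a real valued field. If S ⊂ K[x]^N is a standard basis, for a local degree ordering, of a submodule I ⊂ K[x]^N, then S is a standard basis of the submodule I·K{x}^N of K{x}^N generated by I in K{x}^N. -/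
open MvPowerSeries Finsupp ENNReal

namespace GrauertRVF

variable {K : Type} [Field K]

/-!
Write an element of `I·K{x}^N` as `g = ∑ aᵢ hᵢ` with `aᵢ ∈ K{x}` and `hᵢ ∈ I`, and let `p` be its
leading monomial. Truncating every `aᵢ` at total degree `deg p` gives `g' = ∑ trunc(aᵢ) hᵢ ∈ I`,
which agrees with `g` in all monomials of degree `≤ deg p`. In a local degree ordering all
monomials of larger degree are smaller than `p`, so `p` is also the leading monomial of `g'`, and
the standard basis property of `S` for `I` applies to `g'`.
-/

lemma polyToPS_eq_coe {n : ℕ} (p : MvPolynomial (Fin n) K) :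
    polyToPS p = (p : MvPowerSeries (Fin n) K) := rfl

lemma isConv_one {σ : Type} [Fintype σ] (abv : AbsoluteValue K ℝ) :
    IsConv abv (1 : MvPowerSeries σ K) := by
  classical
  refine ⟨fun _ => 1, fun _ => one_pos, ?_⟩
  have hsingle :
      wnorm abv (fun _ => (1 : ℝ)) (1 : MvPowerSeries σ K) = ENNReal.ofReal (abv 1) := by
    rw [wnorm, tsum_eq_single 0 fun d hd => by simp [MvPowerSeries.coeff_one, hd]]
    simp
  simp [hsingle]

lemma coeff_truncTotal_mul {σ : Type} [Finite σ] {D : ℕ} {e : σ →₀ ℕ} (he : e.degree < D)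
    (a F : MvPowerSeries σ K) :
    MvPowerSeries.coeff e ((truncTotal D a : MvPowerSeries σ K) * F) =
      MvPowerSeries.coeff e (a * F) := by
  classical
  rw [MvPowerSeries.coeff_mul, MvPowerSeries.coeff_mul]
  refine Finset.sum_congr rfl fun x hx => ?_
  have hx1 : x.1.degree < D := by
    rw [← Finset.HasAntidiagonal.mem_antidiagonal.mp hx, map_add] at he
    omega
  rw [MvPolynomial.coeff_coe, coeff_truncTotal _ hx1]

lemma IsLM.of_coeff_eq_of_deg_le {n N : ℕ} {f f' : Fin N → MvPowerSeries (Fin n) K}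
    {p : (Fin n →₀ ℕ) × Fin N} (hp : IsLM f p)
    (hff' : ∀ k e, deg e ≤ deg p.1 → MvPowerSeries.coeff e (f' k) = MvPowerSeries.coeff e (f k)) :
    IsLM f' p := by
  refine ⟨by rw [hff' _ _ le_rfl]; exact hp.1, fun q hq => ?_⟩
  by_cases hdq : deg q.1 ≤ deg p.1
  · exact hp.2 q (by rwa [← hff' _ _ hdq])
  · exact Or.inr (Or.inl (Or.inl (lt_of_not_ge hdq)))

lemma exists_mem_coeff_eq_of_deg_le {n N M : ℕ}
    (I : Submodule (MvPolynomial (Fin n) K) (Fin N → MvPolynomial (Fin n) K))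
    (a : Fin M → MvPowerSeries (Fin n) K) {h : Fin M → Fin N → MvPolynomial (Fin n) K}
    (hh : ∀ i, h i ∈ I) (D : ℕ) :
    ∃ g ∈ I, ∀ k e, deg e ≤ D →
      MvPowerSeries.coeff e (polyToPS (g k)) =
        MvPowerSeries.coeff e (∑ i, a i * polyToPS (h i k)) := by
  refine ⟨∑ i, truncTotal (D + 1) (a i) • h i,
    Submodule.sum_mem _ fun i _ => Submodule.smul_mem _ _ (hh i), fun k e he => ?_⟩
  simp only [polyToPS_eq_coe, Finset.sum_apply, Pi.smul_apply, smul_eq_mul,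
    ← MvPolynomial.coeToMvPowerSeries.ringHom_apply, map_sum, map_mul]
  exact Finset.sum_congr rfl fun i _ => coeff_truncTotal_mul (Nat.lt_succ_of_le he) _ _

theorem polyStdBasis_is_stdBasis_general {K : Type} [Field K] (abv : AbsoluteValue K ℝ)
    {n N m : ℕ}
    (I : Submodule (MvPolynomial (Fin n) K) (Fin N → MvPolynomial (Fin n) K))
    (S : Fin m → Fin N → MvPolynomial (Fin n) K)
    (hSI : ∀ j, S j ∈ I)
    -- `S` is a standard basis of `I`
    (hS : ∀ g ∈ I, g ≠ 0 → ∀ p : (Fin n →₀ ℕ) × Fin N,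
      IsLM (fun k => polyToPS (g k)) p →
      ∃ j, ∃ p' : (Fin n →₀ ℕ) × Fin N, IsLM (fun k => polyToPS (S j k)) p' ∧ MMonDvd p' p) :
    -- then `S` is a standard basis of the submodule `I·K{x}^N` of `K{x}^N`
    (∀ j, (fun k => polyToPS (S j k)) ∈
      {g : Fin N → MvPowerSeries (Fin n) K |
        ∃ (M : ℕ) (a : Fin M → MvPowerSeries (Fin n) K)
          (h : Fin M → (Fin N → MvPolynomial (Fin n) K)),
          (∀ i, IsConv abv (a i)) ∧ (∀ i, h i ∈ I) ∧
          g = fun k => ∑ i, a i * polyToPS (h i k)}) ∧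
    (∀ g ∈ {g : Fin N → MvPowerSeries (Fin n) K |
        ∃ (M : ℕ) (a : Fin M → MvPowerSeries (Fin n) K)
          (h : Fin M → (Fin N → MvPolynomial (Fin n) K)),
          (∀ i, IsConv abv (a i)) ∧ (∀ i, h i ∈ I) ∧
          g = fun k => ∑ i, a i * polyToPS (h i k)},
      g ≠ 0 → ∀ p : (Fin n →₀ ℕ) × Fin N, IsLM g p →
        ∃ j, ∃ p' : (Fin n →₀ ℕ) × Fin N,
          IsLM (fun k => polyToPS (S j k)) p' ∧ MMonDvd p' p) := by
  constructor
  · intro j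
    exact ⟨1, fun _ => 1, fun _ => S j, fun _ => isConv_one abv, fun _ => hSI j, by simp⟩
  · rintro g ⟨M, a, h, -, hh, rfl⟩ - p hp
    obtain ⟨g', hg'I, hg'⟩ := exists_mem_coeff_eq_of_deg_le I a hh (deg p.1)
    have hp' : IsLM (fun k => polyToPS (g' k)) p := hp.of_coeff_eq_of_deg_le hg'
    refine hS g' hg'I ?_ p hp'
    rintro rfl
    exact hp'.1 rfl

/-- Theorem 2.10: a standard basis `S ⊆ K[x]^N` of a submodule
`I ⊆ K[x]^N` (for a local degree ordering) is a standard basis of `I·K{x}^N`. -/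
theorem polyStdBasis_is_stdBasis {K : Type} [Field K] (abv : AbsoluteValue K ℝ)
    {n N m : ℕ}
    (I : Submodule (MvPolynomial (Fin n) K) (Fin N → MvPolynomial (Fin n) K))
    (S : Fin m → Fin N → MvPolynomial (Fin n) K)
    (hSI : ∀ j, S j ∈ I) (hSne : ∀ j, S j ≠ 0)
    -- `S` is a standard basis of `I`
    (hS : ∀ g ∈ I, g ≠ 0 → ∀ p : (Fin n →₀ ℕ) × Fin N,
      IsLM (fun k => polyToPS (g k)) p →
      ∃ j, ∃ p' : (Fin n →₀ ℕ) × Fin N, IsLM (fun k => polyToPS (S j k)) p' ∧ MMonDvd p' p) :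
    -- then `S` is a standard basis of the submodule `I·K{x}^N` of `K{x}^N`
    (∀ j, (fun k => polyToPS (S j k)) ∈
      {g : Fin N → MvPowerSeries (Fin n) K |
        ∃ (M : ℕ) (a : Fin M → MvPowerSeries (Fin n) K)
          (h : Fin M → (Fin N → MvPolynomial (Fin n) K)),
          (∀ i, IsConv abv (a i)) ∧ (∀ i, h i ∈ I) ∧
          g = fun k => ∑ i, a i * polyToPS (h i k)}) ∧
    (∀ g ∈ {g : Fin N → MvPowerSeries (Fin n) K |
        ∃ (M : ℕ) (a : Fin M → MvPowerSeries (Fin n) K)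
          (h : Fin M → (Fin N → MvPolynomial (Fin n) K)),
          (∀ i, IsConv abv (a i)) ∧ (∀ i, h i ∈ I) ∧
          g = fun k => ∑ i, a i * polyToPS (h i k)},
      g ≠ 0 → ∀ p : (Fin n →₀ ℕ) × Fin N, IsLM g p →
        ∃ j, ∃ p' : (Fin n →₀ ℕ) × Fin N,
          IsLM (fun k => polyToPS (S j k)) p' ∧ MMonDvd p' p) :=
  polyStdBasis_is_stdBasis_general abv I S hSI hS
end GrauertRVF
end
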